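/- Let k, ℓ, r be integers with 2 ≤ ℓ ≤ k−1 and ℓ/2 ≤ r < ℓ·(1 − 1/e). Let B be a set of k vertices, let Υ ⊆ B with |Υ| = ℓ, and let F be a fixed forest on vertex set Υ having exactly r edges. Then the number of labelled trees T on vertex set B whose induced subgraph on Υ equals F is at most 3^{2r−ℓ} · 2^{2ℓ−3r} · (k−ℓ)^{k−r−2} · (ℓ+1)^{k−ℓ−1}. -/

import Mathlib

/-!
Root every tree `T` on `B` at a vertex `ρ ∉ Υ`; then `T` is determined by its parent map. If `T`
induces `F`, every component `C` of `F` contains exactly one vertex whose parent lies outside `Υ`,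
its root, and the parent of any other vertex of `C` is its neighbour on the `F`-path to the root.
Hence `T` is determined by the roots (`∏ |C|` choices), their parents (`(k - ℓ) ^ (ℓ - r)` choices,
as `F` has `ℓ - r` components) and the parents of the `k - ℓ - 1` vertices outside `Υ ∪ {ρ}`
(`(k - 1) ^ (k - ℓ - 1)` choices). Finally `n ≤ (8/9) (3/2)^n` bounds `∏ |C|` by
`3^(2r-ℓ) 2^(2ℓ-3r)`, and `(m + 1) (ℓ + m)^m ≤ ((ℓ + 1)(m + 1))^m` for `m = k - ℓ - 1` trades
`(k - 1)^(k-ℓ-1)` for `(k - ℓ)^(k-ℓ-2) (ℓ + 1)^(k-ℓ-1)`.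
-/

-- Equality holds at `n = 2` and `n = 3`.
theorem Nat.nine_mul_two_pow_mul_le (n : ℕ) : 9 * 2 ^ n * n ≤ 8 * 3 ^ n := by
  induction n with
  | zero => simp
  | succ n ih =>
    rcases Nat.lt_or_ge n 2 with hn | hn
    · interval_cases n <;> norm_num
    · have h : 9 * 2 ^ n ≤ 4 * 3 ^ n := by
        obtain ⟨m, rfl⟩ := Nat.exists_eq_add_of_le hn
        rw [pow_add, pow_add, ← mul_assoc, ← mul_assoc]
        exact Nat.mul_le_mul (by norm_num) (Nat.pow_le_pow_left (by norm_num) m)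
      rw [pow_succ, pow_succ]
      nlinarith

theorem Finset.prod_le_three_pow_mul_two_pow {ι : Type*} (s : Finset ι) (n : ι → ℕ)
    (h₁ : 2 * s.card ≤ ∑ i ∈ s, n i) (h₂ : ∑ i ∈ s, n i ≤ 3 * s.card) :
    ∏ i ∈ s, n i ≤ 3 ^ (∑ i ∈ s, n i - 2 * s.card) * 2 ^ (3 * s.card - ∑ i ∈ s, n i) := by
  set N := ∑ i ∈ s, n i
  have hprod : 9 ^ s.card * 2 ^ N * ∏ i ∈ s, n i ≤ 8 ^ s.card * 3 ^ N := by
    have := Finset.prod_le_prod' (s := s) fun i _ => Nat.nine_mul_two_pow_mul_le (n i)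
    simpa only [Finset.prod_mul_distrib, Finset.prod_const, Finset.prod_pow_eq_pow_sum] using this
  refine Nat.le_of_mul_le_mul_left ?_ (by positivity : 0 < 9 ^ s.card * 2 ^ N)
  calc 9 ^ s.card * 2 ^ N * ∏ i ∈ s, n i ≤ 8 ^ s.card * 3 ^ N := hprod
    _ = 9 ^ s.card * 2 ^ N * (3 ^ (N - 2 * s.card) * 2 ^ (3 * s.card - N)) := by
      obtain ⟨a, ha⟩ := Nat.exists_eq_add_of_le h₁
      obtain ⟨b, hb⟩ := Nat.exists_eq_add_of_le h₂
      rw [show N - 2 * s.card = a by omega, show 3 * s.card - N = b by omega,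
        show (8 : ℕ) ^ s.card = 2 ^ (3 * s.card) by rw [pow_mul]; norm_num,
        show (9 : ℕ) ^ s.card = 3 ^ (2 * s.card) by rw [pow_mul]; norm_num, hb, ha]
      ring

theorem Nat.succ_mul_add_pow_le {ℓ : ℕ} (hℓ : 1 ≤ ℓ) :
    ∀ m : ℕ, (m + 1) * (ℓ + m) ^ m ≤ ((ℓ + 1) * (m + 1)) ^ m
  | 0 => le_rfl
  | m + 1 =>
    calc (m + 2) * (ℓ + (m + 1)) ^ (m + 1) ≤ 2 ^ (m + 1) * (ℓ + (m + 1)) ^ (m + 1) :=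
          Nat.mul_le_mul_right _ Nat.lt_two_pow_self
      _ = (2 * (ℓ + (m + 1))) ^ (m + 1) := (mul_pow ..).symm
      _ ≤ ((ℓ + 1) * (m + 2)) ^ (m + 1) := Nat.pow_le_pow_left (by nlinarith) _

theorem Nat.three_mul_lt_two_mul_of_lt_mul_one_sub_exp {r ℓ : ℕ}
    (h : (r : ℝ) < ℓ * (1 - 1 / Real.exp 1)) : 3 * r < 2 * ℓ := by
  have he : 1 / 3 < 1 / Real.exp 1 :=
    one_div_lt_one_div_of_lt (Real.exp_pos 1) (Real.exp_one_lt_d9.trans (by norm_num))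
  have hℓ : (0 : ℝ) ≤ ℓ := Nat.cast_nonneg ℓ
  exact_mod_cast (by nlinarith : (3 * r : ℝ) < 2 * ℓ)

namespace SimpleGraph

variable {V : Type*} {T : SimpleGraph V}

theorem ConnectedComponent.sum_card_supp [Finite V] {G : SimpleGraph V}
    [Fintype G.ConnectedComponent] : ∑ c : G.ConnectedComponent, Nat.card c.supp = Nat.card V := by
  rw [← Nat.card_sigma]
  exact Nat.card_congr (Equiv.sigmaFiberEquiv G.connectedComponentMk)

namespace IsTree

noncomputable def pathToRoot (hT : T.IsTree) (ρ v : V) : T.Walk v ρ :=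
  (hT.existsUnique_path v ρ).choose

lemma isPath_pathToRoot (hT : T.IsTree) (ρ v : V) : (hT.pathToRoot ρ v).IsPath :=
  (hT.existsUnique_path v ρ).choose_spec.1

lemma eq_pathToRoot (hT : T.IsTree) {ρ v : V} {p : T.Walk v ρ} (hp : p.IsPath) :
    p = hT.pathToRoot ρ v :=
  (hT.existsUnique_path v ρ).choose_spec.2 p hp

noncomputable def parent (hT : T.IsTree) (ρ v : V) : V := (hT.pathToRoot ρ v).snd

lemma parent_root (hT : T.IsTree) (ρ : V) : hT.parent ρ ρ = ρ := by
  rw [parent, ← hT.eq_pathToRoot Walk.IsPath.nil, Walk.snd, Walk.getVert_nil]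

lemma adj_parent (hT : T.IsTree) {ρ v : V} (hv : v ≠ ρ) : T.Adj v (hT.parent ρ v) :=
  Walk.adj_snd (Walk.not_nil_of_ne hv)

lemma length_pathToRoot_parent (hT : T.IsTree) {ρ v : V} (hv : v ≠ ρ) :
    (hT.pathToRoot ρ (hT.parent ρ v)).length + 1 = (hT.pathToRoot ρ v).length := by
  rw [parent, ← hT.eq_pathToRoot (hT.isPath_pathToRoot ρ v).tail]
  exact Walk.length_tail_add_one (Walk.not_nil_of_ne hv)

lemma adj_iff_parent (hT : T.IsTree) (ρ : V) {a b : V} :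
    T.Adj a b ↔ a ≠ b ∧ (hT.parent ρ a = b ∨ hT.parent ρ b = a) := by
  refine ⟨fun hab => ⟨hab.ne, ?_⟩, ?_⟩
  · by_cases ha : a ∈ (hT.pathToRoot ρ b).support
    · exact .inr (hT.isAcyclic.eq_snd_of_adj_start (hT.isPath_pathToRoot ρ b) hab.symm ha).symm
    · left
      rw [parent, ← hT.eq_pathToRoot ((hT.isPath_pathToRoot ρ b).cons ha (h := hab))]
      exact Walk.snd_cons _ _
  · rintro ⟨hab, rfl | rfl⟩
    · exact hT.adj_parent fun h => hab (by rw [h, parent_root])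
    · exact (hT.adj_parent fun h => hab (by rw [h, parent_root])).symm

lemma ext_of_parent_eq {T' : SimpleGraph V} (hT : T.IsTree) (hT' : T'.IsTree) (ρ : V)
    (h : ∀ v, v ≠ ρ → hT.parent ρ v = hT'.parent ρ v) : T = T' := by
  have hpar : hT.parent ρ = hT'.parent ρ := funext fun v => by
    rcases eq_or_ne v ρ with rfl | hv
    · rw [parent_root, parent_root]
    · exact h v hv
  ext a b
  rw [hT.adj_iff_parent ρ, hT'.adj_iff_parent ρ, hpar]

variable {S : Set V} {F : SimpleGraph S}

lemma adj_parent_of_mem (hT : T.IsTree) {ρ : V} (hρ : ρ ∉ S) (hind : T.induce S = F)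
    {v : S} (hv : hT.parent ρ v ∈ S) : F.Adj v ⟨_, hv⟩ := by
  subst hind
  exact hT.adj_parent (ne_of_mem_of_not_mem v.2 hρ)

lemma exists_reachable_parent_not_mem (hT : T.IsTree) {ρ : V} (hρ : ρ ∉ S)
    (hind : T.induce S = F) (v : S) : ∃ w : S, F.Reachable w v ∧ hT.parent ρ w ∉ S := by
  obtain ⟨w, hwv, hmin⟩ := (measure fun w : S => (hT.pathToRoot ρ w).length).wf.has_min
    {w | F.Reachable w v} ⟨v, .rfl⟩
  refine ⟨w, hwv, fun hw => hmin ⟨_, hw⟩ ?_ ?_⟩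
  · exact (hT.adj_parent_of_mem hρ hind hw).symm.reachable.trans hwv
  · exact Nat.lt_of_succ_le (hT.length_pathToRoot_parent (ne_of_mem_of_not_mem w.2 hρ)).le

lemma parent_mem_of_mem_support (hT : T.IsTree) {ρ : V} (hind : T.induce S = F) {w y : S}
    (hwy : F.Reachable w y) (hyw : y ≠ w) (hy : (y : V) ∈ (hT.pathToRoot ρ w).support) :
    hT.parent ρ w ∈ S := by
  classical
  subst hind
  obtain ⟨P, hP⟩ := hwy.exists_isPath
  set Q : T.Walk w y := P.map (Embedding.induce S).toHom
  have hQ : Q.IsPath := hP.map Subtype.val_injective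
  have hprefix : (hT.pathToRoot ρ w).takeUntil y hy = Q :=
    congrArg Subtype.val <| (hT.isAcyclic.subsingleton_path _ _).elim
      ⟨_, (hT.isPath_pathToRoot ρ w).takeUntil hy⟩ ⟨_, hQ⟩
  have hQv : Q.getVert 1 = P.getVert 1 := Walk.getVert_map _ P 1
  rw [parent, ← Walk.snd_takeUntil (Subtype.coe_ne_coe.mpr hyw) _ hy, hprefix, Walk.snd, hQv]
  exact (P.getVert 1).2

lemma parent_eq_penultimate (hT : T.IsTree) {ρ : V} (hind : T.induce S = F) {w v : S}
    (hw : hT.parent ρ w ∉ S) {P : F.Walk w v} (hP : P.IsPath) (hvw : v ≠ w) :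
    hT.parent ρ v = P.penultimate := by
  classical
  subst hind
  set Q : T.Walk w v := P.map (Embedding.induce S).toHom
  have hQ : Q.IsPath := hP.map Subtype.val_injective
  have hQv : ∀ i, Q.getVert i = P.getVert i := Walk.getVert_map _ P
  have hQlen : Q.length = P.length := Walk.length_map _ P
  have hQs : Q.support = P.support.map Subtype.val := Walk.support_map _ P
  -- `Q.reverse` meets the root path of `w` only in `w`, so their concatenation is the root path
  -- of `v`.
  have hW : (Q.reverse.append (hT.pathToRoot ρ w)).IsPath := by
    rw [Walk.isPath_def, Walk.support_append, List.nodup_append]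
    refine ⟨hQ.reverse.support_nodup, (hT.isPath_pathToRoot ρ w).support_nodup.tail, ?_⟩
    rintro _ hx x hx' rfl
    rw [Walk.support_reverse, List.mem_reverse, hQs, List.mem_map] at hx
    obtain ⟨z, hz, rfl⟩ := hx
    have hzw : (z : V) ≠ w := by
      have := (hT.isPath_pathToRoot ρ w).support_nodup
      rw [← Walk.cons_tail_support] at this
      exact fun h => (List.nodup_cons.mp this).1 (h ▸ hx')
    exact hw (hT.parent_mem_of_mem_support rfl (P.takeUntil z hz).reachable
      (fun h => hzw (congrArg _ h)) (List.mem_of_mem_tail hx'))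
  have hlen : 1 ≤ Q.reverse.length := by
    rw [Walk.length_reverse, hQlen, Nat.one_le_iff_ne_zero]
    exact fun h => hvw (Walk.eq_of_length_eq_zero h).symm
  rw [parent, ← hT.eq_pathToRoot hW, Walk.snd, Walk.getVert_append', if_pos hlen,
    ← Walk.snd, Walk.snd_reverse, Walk.penultimate, hQv, hQlen]

lemma eq_of_reachable_of_parent_not_mem (hT : T.IsTree) {ρ : V} (hind : T.induce S = F)
    {w w' : S} (h : F.Reachable w w') (hw : hT.parent ρ w ∉ S) (hw' : hT.parent ρ w' ∉ S) :
    w = w' := by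
  by_contra hne
  obtain ⟨P, hP⟩ := h.exists_isPath
  exact hw' (hT.parent_eq_penultimate hind hw hP (Ne.symm hne) ▸ P.penultimate.2)

noncomputable def componentRoot (hT : T.IsTree) {ρ : V} (hρ : ρ ∉ S) (hind : T.induce S = F)
    (c : F.ConnectedComponent) : S :=
  (hT.exists_reachable_parent_not_mem hρ hind c.out).choose

section componentRoot

variable (hT : T.IsTree) {ρ : V} (hρ : ρ ∉ S) (hind : T.induce S = F)

lemma connectedComponentMk_componentRoot (c : F.ConnectedComponent) :
    F.connectedComponentMk (hT.componentRoot hρ hind c) = c :=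
  (ConnectedComponent.sound (hT.exists_reachable_parent_not_mem hρ hind c.out).choose_spec.1).trans
    c.out_eq

lemma parent_componentRoot_not_mem (c : F.ConnectedComponent) :
    hT.parent ρ (hT.componentRoot hρ hind c) ∉ S :=
  (hT.exists_reachable_parent_not_mem hρ hind c.out).choose_spec.2

lemma componentRoot_connectedComponentMk {w : S} (hw : hT.parent ρ w ∉ S) :
    hT.componentRoot hρ hind (F.connectedComponentMk w) = w :=
  hT.eq_of_reachable_of_parent_not_mem hind
    (ConnectedComponent.exact (hT.connectedComponentMk_componentRoot hρ hind _))
    (hT.parent_componentRoot_not_mem hρ hind _) hw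

noncomputable def parentNotMemEquiv :
    {v : S // hT.parent ρ v ∉ S} ≃ F.ConnectedComponent where
  toFun v := F.connectedComponentMk v
  invFun c := ⟨hT.componentRoot hρ hind c, hT.parent_componentRoot_not_mem hρ hind c⟩
  left_inv v := Subtype.ext (hT.componentRoot_connectedComponentMk hρ hind v.2)
  right_inv := hT.connectedComponentMk_componentRoot hρ hind

noncomputable def parentMemEquiv : {v : S // hT.parent ρ v ∈ S} ≃ F.edgeSet :=
  Equiv.ofBijective (fun v => ⟨s(v, ⟨_, v.2⟩), hT.adj_parent_of_mem hρ hind v.2⟩) <| by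
    constructor
    · rintro ⟨v, hv⟩ ⟨w, hw⟩ hvw
      rcases Sym2.eq_iff.mp (congrArg Subtype.val hvw) with ⟨h, -⟩ | ⟨hvpw, hpvw⟩
      · exact Subtype.ext h
      · have hv' := hT.length_pathToRoot_parent (ne_of_mem_of_not_mem v.2 hρ)
        have hw' := hT.length_pathToRoot_parent (ne_of_mem_of_not_mem w.2 hρ)
        have hpv : hT.parent ρ v = w := congrArg Subtype.val hpvw
        have hpw : hT.parent ρ w = v := (congrArg Subtype.val hvpw).symm
        rw [hpv] at hv'
        rw [hpw] at hw'
        omega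
    · rintro ⟨e, he⟩
      induction e using Sym2.ind with | _ x y => ?_
      have hxy : T.Adj x y := by subst hind; exact he
      rcases ((hT.adj_iff_parent ρ).mp hxy).2 with hx | hy
      · exact ⟨⟨x, hx ▸ y.2⟩, Subtype.ext (Sym2.congr_right.mpr (Subtype.ext hx))⟩
      · exact ⟨⟨y, hy ▸ x.2⟩, Subtype.ext ((Sym2.congr_right.mpr (Subtype.ext hy)).trans
          Sym2.eq_swap)⟩

end componentRoot

lemma card_edgeSet_add_card_connectedComponent [Finite V] (hT : T.IsTree) {ρ : V}
    (hρ : ρ ∉ S) (hind : T.induce S = F) :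
    Nat.card F.edgeSet + Nat.card F.ConnectedComponent = Nat.card S := by
  classical
  rw [← Nat.card_congr (hT.parentMemEquiv hρ hind),
    ← Nat.card_congr (hT.parentNotMemEquiv hρ hind), ← Nat.card_sum,
    Nat.card_congr (Equiv.sumCompl _)]

lemma parent_eq_of_componentRoot_eq {T' : SimpleGraph V} (hT : T.IsTree) (hT' : T'.IsTree)
    {ρ : V} (hρ : ρ ∉ S) (hind : T.induce S = F) (hind' : T'.induce S = F)
    (hroot : ∀ c, hT.componentRoot hρ hind c = hT'.componentRoot hρ hind' c)
    (hpar : ∀ c, hT.parent ρ (hT.componentRoot hρ hind c) =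
      hT'.parent ρ (hT'.componentRoot hρ hind' c)) (v : S) :
    hT.parent ρ v = hT'.parent ρ v := by
  set c := F.connectedComponentMk v
  have hw := hT.parent_componentRoot_not_mem hρ hind c
  have hw' : hT'.parent ρ (hT.componentRoot hρ hind c) ∉ S :=
    hroot c ▸ hT'.parent_componentRoot_not_mem hρ hind' c
  rcases eq_or_ne v (hT.componentRoot hρ hind c) with hv | hv
  · rw [hv, hpar, ← hroot]
  · obtain ⟨P, hP⟩ :=
      (ConnectedComponent.exact (hT.connectedComponentMk_componentRoot hρ hind c)).exists_isPath
    rw [hT.parent_eq_penultimate hind hw hP hv, hT'.parent_eq_penultimate hind' hw' hP hv]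

end IsTree

noncomputable def treeCode {ρ : V} (hρ : ρ ∉ S)
    (T : {T : SimpleGraph V // T.IsTree ∧ T.induce S = F}) :
    (∀ c : F.ConnectedComponent, c.supp) × (F.ConnectedComponent → (Sᶜ : Set V)) ×
      (∀ u : (Sᶜ \ {ρ} : Set V), ({(u : V)}ᶜ : Set V)) :=
  (fun c => ⟨T.2.1.componentRoot hρ T.2.2 c, T.2.1.connectedComponentMk_componentRoot hρ T.2.2 c⟩,
   fun c => ⟨T.2.1.parent ρ (T.2.1.componentRoot hρ T.2.2 c),
     T.2.1.parent_componentRoot_not_mem hρ T.2.2 c⟩,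
   fun u => ⟨T.2.1.parent ρ u, (T.2.1.adj_parent u.2.2).ne'⟩)

lemma treeCode_injective {ρ : V} (hρ : ρ ∉ S) : Function.Injective (treeCode (F := F) hρ) := by
  rintro ⟨T₁, hT₁, hind₁⟩ ⟨T₂, hT₂, hind₂⟩ h
  simp only [treeCode, Prod.mk.injEq, funext_iff, Subtype.ext_iff] at h
  obtain ⟨hroot, hrootpar, hpar⟩ := h
  refine Subtype.ext (hT₁.ext_of_parent_eq hT₂ ρ fun v hv => ?_)
  by_cases hvS : v ∈ S
  · exact hT₁.parent_eq_of_componentRoot_eq hT₂ hρ hind₁ hind₂ (fun c => Subtype.ext (hroot c))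
      hrootpar ⟨v, hvS⟩
  · exact hpar ⟨v, hvS, hv⟩

theorem card_isTree_induce_eq_le [Fintype V] [Fintype F.ConnectedComponent] {ρ : V}
    (hρ : ρ ∉ S) :
    Nat.card {T : SimpleGraph V // T.IsTree ∧ T.induce S = F} ≤
      (∏ c : F.ConnectedComponent, Nat.card c.supp) *
        Nat.card (Sᶜ : Set V) ^ Nat.card F.ConnectedComponent *
        (Nat.card V - 1) ^ (Nat.card (Sᶜ : Set V) - 1) := by
  classical
  refine (Nat.card_le_card_of_injective _ (treeCode_injective hρ)).trans_eq ?_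
  have hcompl (u : V) : Nat.card ({u}ᶜ : Set V) = Nat.card V - 1 := by
    rw [Nat.card_coe_set_eq, Set.ncard_compl, Set.ncard_singleton]
  rw [Nat.card_prod, Nat.card_prod, Nat.card_pi, Nat.card_fun, Nat.card_pi]
  simp only [hcompl]
  rw [Finset.prod_const, Finset.card_univ,
    ← Nat.card_eq_fintype_card, Nat.card_coe_set_eq (Sᶜ \ {ρ}),
    Set.ncard_sdiff_singleton_of_mem hρ, Nat.card_coe_set_eq, mul_assoc]

theorem card_isTree_induce_eq_le_pow [Fintype V] {S : Set V} {F : SimpleGraph S} {ρ : V}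
    (hρ : ρ ∉ S) {ℓ m r : ℕ} (hS : Nat.card S = ℓ) (hV : Nat.card V = ℓ + m + 1)
    (hcomp : r + Nat.card F.ConnectedComponent = ℓ) (h₁ : ℓ ≤ 2 * r) (h₂ : 3 * r < 2 * ℓ) :
    Nat.card {T : SimpleGraph V // T.IsTree ∧ T.induce S = F} ≤
      3 ^ (2 * r - ℓ) * 2 ^ (2 * ℓ - 3 * r) * (m + 1) ^ (ℓ + m - r - 1) * (ℓ + 1) ^ m := by
  classical
  obtain ⟨s, hs⟩ : ∃ s, Nat.card F.ConnectedComponent = s + 1 := ⟨ℓ - r - 1, by omega⟩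
  have hroots := Finset.prod_le_three_pow_mul_two_pow Finset.univ
    (fun c : F.ConnectedComponent => Nat.card c.supp)
  rw [ConnectedComponent.sum_card_supp, hS, Finset.card_univ, ← Nat.card_eq_fintype_card, hs,
    show ℓ - 2 * (s + 1) = 2 * r - ℓ by omega, show 3 * (s + 1) - ℓ = 2 * ℓ - 3 * r by omega]
    at hroots
  have hcompl : Nat.card (Sᶜ : Set V) = m + 1 := by
    rw [Nat.card_coe_set_eq, Set.ncard_compl, ← Nat.card_coe_set_eq, hS, hV]; omega
  have hcard := card_isTree_induce_eq_le (F := F) hρ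
  rw [hcompl, hV, hs, Nat.add_sub_cancel, Nat.add_sub_cancel] at hcard
  refine hcard.trans ?_
  calc _ = (∏ c : F.ConnectedComponent, Nat.card c.supp) * (m + 1) ^ s *
        ((m + 1) * (ℓ + m) ^ m) := by ring
    _ ≤ 3 ^ (2 * r - ℓ) * 2 ^ (2 * ℓ - 3 * r) * (m + 1) ^ s * ((ℓ + 1) * (m + 1)) ^ m := by
        gcongr ?_ * _ * ?_
        · exact hroots (by omega) (by omega)
        · exact Nat.succ_mul_add_pow_le (by omega) m
    _ = _ := by rw [show ℓ + m - r - 1 = s + m by omega, mul_pow, pow_add]; ring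

end SimpleGraph

theorem tree_extension_count_medium_r_general {B : Type*} [Fintype B] (k ℓ r : ℕ)
    (hB : Fintype.card B = k) (Υ : Finset B) (hΥ : Υ.card = ℓ)
    (hℓk : ℓ < k)
    (hr_lo : ℓ ≤ 2 * r) (hr_hi : (r : ℝ) < (ℓ : ℝ) * (1 - 1 / Real.exp 1))
    (F : SimpleGraph (↑Υ : Set B)) (hFr : F.edgeSet.ncard = r) :
    (Nat.card {T : SimpleGraph B // T.IsTree ∧ T.induce (↑Υ : Set B) = F} : ℝ) ≤
      (3 : ℝ) ^ (2 * r - ℓ) * (2 : ℝ) ^ (2 * ℓ - 3 * r) *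
        ((k : ℝ) - (ℓ : ℝ)) ^ (k - r - 2) * ((ℓ : ℝ) + 1) ^ (k - ℓ - 1) := by
  classical
  have hΥcard : Nat.card (Υ : Set B) = ℓ := by rw [Nat.card_coe_set_eq, Set.ncard_coe_finset, hΥ]
  obtain ⟨ρ, hρ⟩ : (Υᶜ : Finset B).Nonempty := by
    rw [← Finset.card_pos, Finset.card_compl, hB, hΥ]; omega
  replace hρ : ρ ∉ (Υ : Set B) := Finset.mem_compl.mp hρ
  obtain ⟨m, rfl⟩ : ∃ m, k = ℓ + m + 1 := ⟨k - ℓ - 1, by omega⟩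
  rw [← Nat.cast_sub hℓk.le]
  rcases isEmpty_or_nonempty {T : SimpleGraph B // T.IsTree ∧ T.induce (↑Υ : Set B) = F} with
    hempty | ⟨⟨T₀, hT₀, hind₀⟩⟩
  · rw [Nat.card_of_isEmpty, Nat.cast_zero]; positivity
  have hcomp := hT₀.card_edgeSet_add_card_connectedComponent hρ hind₀
  rw [Nat.card_coe_set_eq, hFr, hΥcard] at hcomp
  have hcard := SimpleGraph.card_isTree_induce_eq_le_pow hρ hΥcard
    (by rw [Nat.card_eq_fintype_card, hB]) hcomp hr_lo
    (Nat.three_mul_lt_two_mul_of_lt_mul_one_sub_exp hr_hi)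
  rw [show ℓ + m + 1 - ℓ - 1 = m by omega, show ℓ + m + 1 - ℓ = m + 1 by omega,
    show ℓ + m + 1 - r - 2 = ℓ + m - r - 1 by omega]
  exact_mod_cast hcard

/-- Let `B` be a vertex set of size `k`, `Υ ⊆ B` of size `ℓ`, and `F` a fixed forest on `Υ`
with exactly `r` edges, where `2 ≤ ℓ ≤ k−1` and `ℓ/2 ≤ r < ℓ(1 − 1/e)`. Then the number of
labelled trees on `B` inducing `F` on `Υ` is at most
`3^{2r−ℓ} · 2^{2ℓ−3r} · (k−ℓ)^{k−r−2} · (ℓ+1)^{k−ℓ−1}`. -/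
theorem tree_extension_count_medium_r {B : Type*} [Fintype B] (k ℓ r : ℕ)
    (hB : Fintype.card B = k) (Υ : Finset B) (hΥ : Υ.card = ℓ)
    (hℓ2 : 2 ≤ ℓ) (hℓk : ℓ < k)
    (hr_lo : ℓ ≤ 2 * r) (hr_hi : (r : ℝ) < (ℓ : ℝ) * (1 - 1 / Real.exp 1))
    (F : SimpleGraph (↑Υ : Set B)) (hF : F.IsAcyclic) (hFr : F.edgeSet.ncard = r) :
    (Nat.card {T : SimpleGraph B // T.IsTree ∧ T.induce (↑Υ : Set B) = F} : ℝ) ≤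
      (3 : ℝ) ^ (2 * r - ℓ) * (2 : ℝ) ^ (2 * ℓ - 3 * r) *
        ((k : ℝ) - (ℓ : ℝ)) ^ (k - r - 2) * ((ℓ : ℝ) + 1) ^ (k - ℓ - 1) :=
  tree_extension_count_medium_r_general k ℓ r hB Υ hΥ hℓk hr_lo hr_hi F hFr
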